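/- Let Q ⊆ ℝ^d be a nonempty compact convex set, N a norm on ℝ^d with dual norm N*(z) = sup{⟨z,x⟩ : N(x) ≤ 1}, σ > 0, ρ > 0, and let ω : Q → ℝ be (1/σ)-strongly convex with respect to N (for all x, y ∈ Q and every vector g with ω(z) ≥ ω(x) + ⟨g, z−x⟩ for all z ∈ Q, one has ω(y) − ω(x) − ⟨g, y−x⟩ ≥ (1/(2σ))·N(y−x)²). Fix z₀ ∈ ℝ^d, let y₀ ∈ Q maximize y ↦ ⟨z₀, y⟩ − ω(y) over Q, and let D ≥ sup_{y ∈ Q} (ω(y) − ω(y₀) − ⟨z₀, y − y₀⟩). Let f : Q → ℝ be convex, let T be a positive integer, set η = √(2D/(T·σ·ρ²)), and define sequences by: y_t maximizes y ↦ ⟨z_t, y⟩ − ω(y) over Q, g_t satisfies f(y) ≥ f(y_t) + ⟨g_t, y − y_t⟩ for all y ∈ Q and N*(g_t) ≤ ρ, and z_{t+1} = z_t − η·g_t, for t = 0, 1, …, T−1. Then for every y ∈ Q, (1/T)·Σ_{t=0}^{T−1} ⟨g_t, y_t − y⟩ ≤ √(2·D·σ·ρ²/T). In particular, if T ≥ 2·D·σ·ρ²/ε²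 then (1/T)·Σ_{t=0}^{T−1} ⟨g_t, y_t − y⟩ ≤ ε for all y ∈ Q. -/

import Mathlib

open Finset

/-- The standard inner product on `ℝ^d`. -/
noncomputable def dotp {d : ℕ} (x y : Fin d → ℝ) : ℝ := ∑ i, x i * y i

/-- The dual norm `N*(z) = sup {⟨z,x⟩ : N(x) ≤ 1}`. -/
noncomputable def dualNorm {d : ℕ} (N : (Fin d → ℝ) → ℝ) (z : Fin d → ℝ) : ℝ :=
  sSup ((fun x => dotp z x) '' {x | N x ≤ 1})

/-!
Each mirror step trades the linearised regret `⟨g_t, y_t - u⟩` against the decrease of the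
Bregman divergence `ω u - ω y_t - ⟨z_t, u - y_t⟩`. The three-point identity leaves the error
`η ⟨g_t, y_t - y_{t+1}⟩ ≤ η ρ N(y_{t+1} - y_t)`, and strong convexity pays for it up to
`σ η² ρ² / 2` (Young's inequality). Telescoping gives `η Σ_t ⟨g_t, y_t - u⟩ ≤ D + T σ η² ρ² / 2`,
and the chosen `η` balances the two terms. The bound `⟨g, x⟩ ≤ N*(g) N(x)` needs `{N ≤ 1}` to be
bounded, which holds since a norm on `ℝ^d` is bounded below by a multiple of the sup norm on the
compact unit sphere.
-/

theorem Seminorm.exists_pos_mul_norm_le {E : Type*} [NormedAddCommGroup E] [NormedSpace ℝ E]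
    [FiniteDimensional ℝ E] (p : Seminorm ℝ E) (hp : ∀ x, p x = 0 → x = 0) :
    ∃ c > 0, ∀ x, c * ‖x‖ ≤ p x := by
  rcases subsingleton_or_nontrivial E with _ | _
  · exact ⟨1, one_pos, fun x => by simp [Subsingleton.elim x 0]⟩
  have hcont : Continuous p := continuousOn_univ.1 (p.convexOn.continuousOn isOpen_univ)
  obtain ⟨v, hv, hmin⟩ := (isCompact_sphere (0 : E) 1).exists_isMinOn
    (NormedSpace.sphere_nonempty.2 zero_le_one) hcont.continuousOn
  have hv0 : v ≠ 0 := ne_zero_of_mem_unit_sphere ⟨v, hv⟩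
  refine ⟨p v, (apply_nonneg p v).lt_of_ne' fun h => hv0 (hp v h), fun x => ?_⟩
  obtain rfl | hx := eq_or_ne x 0
  · simp
  have hxpos : 0 < ‖x‖ := norm_pos_iff.2 hx
  have h := hmin (a := ‖x‖⁻¹ • x) (by simp [norm_smul, hxpos.ne'])
  rw [Set.mem_ofPred_eq, map_smul_eq_mul, norm_inv, norm_norm, ← div_eq_inv_mul,
    le_div_iff₀ hxpos] at h
  exact h

section DualNorm

variable {d : ℕ}

theorem dotp_eq_dotProduct (x y : Fin d → ℝ) : dotp x y = x ⬝ᵥ y := rfl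

theorem bddAbove_dotp_image_seminorm_le_one (p : Seminorm ℝ (Fin d → ℝ))
    (hp : ∀ x, p x = 0 → x = 0) (g : Fin d → ℝ) :
    BddAbove ((fun x => dotp g x) '' {x | p x ≤ 1}) := by
  obtain ⟨c, hc, hcp⟩ := p.exists_pos_mul_norm_le hp
  have hsub : {x | p x ≤ 1} ⊆ Metric.closedBall 0 (1 / c) := fun x hx =>
    mem_closedBall_zero_iff.2 ((le_div_iff₀' hc).2 ((hcp x).trans hx))
  have hcont : Continuous fun x => dotp g x := by unfold dotp; fun_prop
  exact ((isCompact_closedBall 0 (1 / c)).bddAbove_image hcont.continuousOn).mono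
    (Set.image_mono hsub)

theorem dotp_le_dualNorm_mul (p : Seminorm ℝ (Fin d → ℝ)) (hp : ∀ x, p x = 0 → x = 0)
    (g x : Fin d → ℝ) : dotp g x ≤ dualNorm p g * p x := by
  obtain hx | hx := (apply_nonneg p x).eq_or_lt
  · simp [hp x hx.symm, dotp]
  have hunit : dotp g ((p x)⁻¹ • x) ≤ dualNorm p g :=
    le_csSup (bddAbove_dotp_image_seminorm_le_one p hp g)
      ⟨_, by simp [map_smul_eq_mul, abs_of_pos hx, inv_mul_cancel₀ hx.ne'], rfl⟩
  rw [dotp_eq_dotProduct, dotProduct_smul, smul_eq_mul, inv_mul_le_iff₀ hx, mul_comm] at hunit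
  exact hunit

end DualNorm

section MirrorDescent

variable {d : ℕ}

noncomputable def bregmanDiv (ω : (Fin d → ℝ) → ℝ) (z x u : Fin d → ℝ) : ℝ :=
  ω u - ω x - dotp z (u - x)

@[simp]
theorem bregmanDiv_self (ω : (Fin d → ℝ) → ℝ) (z x : Fin d → ℝ) : bregmanDiv ω z x x = 0 := by
  simp [bregmanDiv, dotp_eq_dotProduct]

theorem bregmanDiv_three_point (ω : (Fin d → ℝ) → ℝ) (z g x x' u : Fin d → ℝ) (η : ℝ) :
    bregmanDiv ω z x u - bregmanDiv ω (z - η • g) x' u - bregmanDiv ω z x x' =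
      η * dotp g (x' - u) := by
  simp only [bregmanDiv, dotp_eq_dotProduct, sub_dotProduct, dotProduct_sub, smul_dotProduct,
    smul_eq_mul]
  ring

theorem add_dotp_sub_le_of_isMaxOn {Q : Set (Fin d → ℝ)} {ω : (Fin d → ℝ) → ℝ} {z x : Fin d → ℝ}
    (h : IsMaxOn (fun u => dotp z u - ω u) Q x) {u : Fin d → ℝ} (hu : u ∈ Q) :
    ω x + dotp z (u - x) ≤ ω u := by
  have hmax := isMaxOn_iff.1 h u hu
  rw [dotp_eq_dotProduct, dotProduct_sub]
  simp only [dotp_eq_dotProduct] at hmax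
  linarith

theorem eq_of_bregmanDiv_nonpos {N : (Fin d → ℝ) → ℝ} {ω : (Fin d → ℝ) → ℝ} {σ : ℝ}
    (hσ : 0 < σ) (hN0 : ∀ v, N v = 0 → v = 0) {z x u : Fin d → ℝ}
    (hstrong : 1 / (2 * σ) * N (u - x) ^ 2 ≤ bregmanDiv ω z x u)
    (hB : bregmanDiv ω z x u ≤ 0) : u = x := by
  have h : 1 / (2 * σ) * N (u - x) ^ 2 = 0 := le_antisymm (hstrong.trans hB) (by positivity)
  have hsq := (mul_eq_zero.1 h).resolve_left (by positivity)
  exact sub_eq_zero.1 (hN0 _ (pow_eq_zero_iff two_ne_zero |>.1 hsq))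

theorem mirror_step_le {N : (Fin d → ℝ) → ℝ} {ω : (Fin d → ℝ) → ℝ} {σ ρ η : ℝ} (hσ : 0 < σ)
    (hη : 0 ≤ η) {z g x x' u : Fin d → ℝ}
    (hstrong : 1 / (2 * σ) * N (x' - x) ^ 2 ≤ bregmanDiv ω z x x')
    (hg : dotp g (x - x') ≤ ρ * N (x' - x)) :
    η * dotp g (x - u) ≤
      bregmanDiv ω z x u - bregmanDiv ω (z - η • g) x' u + σ * η ^ 2 * ρ ^ 2 / 2 := by
  have hsplit : η * dotp g (x - u) = η * dotp g (x' - u) + η * dotp g (x - x') := by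
    simp only [dotp_eq_dotProduct, dotProduct_sub]
    ring
  -- Young's inequality `η ρ a ≤ a² / (2σ) + σ η² ρ² / 2` absorbs the linear term.
  have hyoung : η * (ρ * N (x' - x)) ≤ 1 / (2 * σ) * N (x' - x) ^ 2 + σ * η ^ 2 * ρ ^ 2 / 2 := by
    have hsq : 0 ≤ 1 / (2 * σ) * (N (x' - x) - σ * η * ρ) ^ 2 := by positivity
    have key : 1 / (2 * σ) * (N (x' - x) - σ * η * ρ) ^ 2 =
        1 / (2 * σ) * N (x' - x) ^ 2 + σ * η ^ 2 * ρ ^ 2 / 2 - η * (ρ * N (x' - x)) := by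
      field_simp
      ring
    linarith
  have hthree := bregmanDiv_three_point ω z g x x' u η
  linarith [mul_le_mul_of_nonneg_left hg hη]

theorem mirror_descent_regret_le {Q : Set (Fin d → ℝ)} {p : Seminorm ℝ (Fin d → ℝ)}
    (hp : ∀ x, p x = 0 → x = 0) {σ ρ η : ℝ} (hσ : 0 < σ) (hη : 0 ≤ η) {ω : (Fin d → ℝ) → ℝ}
    (hstrong : ∀ x ∈ Q, ∀ y ∈ Q, ∀ g : Fin d → ℝ,
      (∀ z ∈ Q, ω x + dotp g (z - x) ≤ ω z) → 1 / (2 * σ) * p (y - x) ^ 2 ≤ bregmanDiv ω g x y)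
    {T : ℕ} (hT : 0 < T) {y z g : ℕ → Fin d → ℝ}
    (hymax : ∀ t < T, y t ∈ Q ∧ IsMaxOn (fun u => dotp (z t) u - ω u) Q (y t))
    (hg : ∀ t < T, dualNorm p (g t) ≤ ρ) (hz : ∀ t < T, z (t + 1) = z t - η • g t)
    {u : Fin d → ℝ} (hu : u ∈ Q) :
    η * ∑ t ∈ range T, dotp (g t) (y t - u) ≤
      bregmanDiv ω (z 0) (y 0) u + T * (σ * η ^ 2 * ρ ^ 2 / 2) := by
  -- The last step is compared with `u` itself, whose divergence from `u` vanishes.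
  set w : ℕ → Fin d → ℝ := fun t => if t < T then y t else u
  have hwQ : ∀ t, w t ∈ Q := fun t => by
    by_cases ht : t < T
    · simpa [w, ht] using (hymax t ht).1
    · simpa [w, ht] using hu
  have hstep : ∀ t < T, η * dotp (g t) (y t - u) ≤
      bregmanDiv ω (z t) (w t) u - bregmanDiv ω (z (t + 1)) (w (t + 1)) u +
        σ * η ^ 2 * ρ ^ 2 / 2 := fun t ht => by
    have hwt : w t = y t := if_pos ht
    rw [hwt, hz t ht]
    refine mirror_step_le hσ hη (hstrong _ (hymax t ht).1 _ (hwQ _) _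
      fun v hv => add_dotp_sub_le_of_isMaxOn (hymax t ht).2 hv) ?_
    calc dotp (g t) (y t - w (t + 1)) ≤ dualNorm p (g t) * p (y t - w (t + 1)) :=
          dotp_le_dualNorm_mul p hp _ _
      _ ≤ ρ * p (w (t + 1) - y t) := by
          rw [map_sub_rev]
          exact mul_le_mul_of_nonneg_right (hg t ht) (apply_nonneg _ _)
  calc η * ∑ t ∈ range T, dotp (g t) (y t - u)
      ≤ ∑ t ∈ range T, (bregmanDiv ω (z t) (w t) u - bregmanDiv ω (z (t + 1)) (w (t + 1)) u +
          σ * η ^ 2 * ρ ^ 2 / 2) := by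
        rw [mul_sum]
        exact sum_le_sum fun t ht => hstep t (mem_range.1 ht)
    _ = bregmanDiv ω (z 0) (y 0) u + T * (σ * η ^ 2 * ρ ^ 2 / 2) := by
        rw [sum_add_distrib, sum_range_sub', sum_const, card_range, nsmul_eq_mul]
        simp [w, hT]

end MirrorDescent

theorem div_le_sqrt_of_mul_le {T D σ ρ η S : ℝ} (hT : 0 < T) (hD : 0 < D) (hσ : 0 < σ)
    (hρ : 0 < ρ) (hη : η = √(2 * D / (T * σ * ρ ^ 2)))
    (hS : η * S ≤ D + T * (σ * η ^ 2 * ρ ^ 2 / 2)) :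
    1 / T * S ≤ √(2 * D * σ * ρ ^ 2 / T) := by
  have hηpos : 0 < η := hη ▸ Real.sqrt_pos.2 (by positivity)
  -- this choice of `η` makes the two terms of the bound equal
  have hbalance : T * (σ * η ^ 2 * ρ ^ 2 / 2) = D := by
    rw [hη, Real.sq_sqrt (by positivity)]
    field_simp
  have hηR : η * (T * √(2 * D * σ * ρ ^ 2 / T)) = 2 * D := by
    rw [mul_left_comm, hη, ← Real.sqrt_mul (by positivity),
      show 2 * D / (T * σ * ρ ^ 2) * (2 * D * σ * ρ ^ 2 / T) = (2 * D / T) ^ 2 by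
        field_simp,
      Real.sqrt_sq (by positivity)]
    field_simp
  rw [one_div_mul_eq_div, div_le_iff₀' hT]
  exact le_of_mul_le_mul_left (by linarith) hηpos

theorem Real.sqrt_div_le_of_div_sq_le {a T ε : ℝ} (hε : 0 < ε) (hT : 0 ≤ T) (h : a / ε ^ 2 ≤ T) :
    √(a / T) ≤ ε :=
  (Real.sqrt_le_left hε.le).2 <|
    div_le_of_le_mul₀ hT (by positivity) (by rwa [div_le_iff₀ (by positivity), mul_comm] at h)

theorem mirror_descent_regret_general
    (d : ℕ) (Q : Set (Fin d → ℝ))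
    (N : (Fin d → ℝ) → ℝ)
    (hN0 : ∀ x, N x = 0 ↔ x = 0)
    (hNsmul : ∀ (a : ℝ) (x : Fin d → ℝ), N (a • x) = |a| * N x)
    (hNtri : ∀ x y, N (x + y) ≤ N x + N y)
    (σ ρ : ℝ) (hσ : 0 < σ) (hρ : 0 < ρ)
    (ω : (Fin d → ℝ) → ℝ)
    (hstrong : ∀ x ∈ Q, ∀ y ∈ Q, ∀ g : Fin d → ℝ,
      (∀ z ∈ Q, ω x + dotp g (z - x) ≤ ω z) →
      (1 / (2 * σ)) * N (y - x) ^ 2 ≤ ω y - ω x - dotp g (y - x))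
    (f : (Fin d → ℝ) → ℝ)
    (T : ℕ)
    (D : ℝ)
    (η : ℝ) (hη : η = Real.sqrt (2 * D / (T * σ * ρ ^ 2)))
    (y z g : ℕ → Fin d → ℝ)
    (hymax : ∀ t < T, y t ∈ Q ∧
      ∀ y' ∈ Q, dotp (z t) y' - ω y' ≤ dotp (z t) (y t) - ω (y t))
    (hD : ∀ y' ∈ Q, ω y' - ω (y 0) - dotp (z 0) (y' - y 0) ≤ D)
    (hg : ∀ t < T, (∀ y' ∈ Q, f (y t) + dotp (g t) (y' - y t) ≤ f y') ∧
      dualNorm N (g t) ≤ ρ)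
    (hz : ∀ t < T, z (t + 1) = z t - η • g t) :
    (∀ y' ∈ Q, (1 / (T : ℝ)) * ∑ t ∈ Finset.range T, dotp (g t) (y t - y') ≤
        Real.sqrt (2 * D * σ * ρ ^ 2 / T)) ∧
    (∀ ε : ℝ, 0 < ε → 2 * D * σ * ρ ^ 2 / ε ^ 2 ≤ (T : ℝ) →
      ∀ y' ∈ Q, (1 / (T : ℝ)) * ∑ t ∈ Finset.range T, dotp (g t) (y t - y') ≤ ε) := by
  let p : Seminorm ℝ (Fin d → ℝ) := Seminorm.of N hNtri (by simpa using hNsmul)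
  have hregret : ∀ y' ∈ Q, (1 / (T : ℝ)) * ∑ t ∈ Finset.range T, dotp (g t) (y t - y') ≤
      Real.sqrt (2 * D * σ * ρ ^ 2 / T) := by
    intro y' hy'
    obtain rfl | hT := T.eq_zero_or_pos
    · simp
    obtain hD0 | hD0 := le_or_gt D 0
    · have hQ : ∀ u ∈ Q, u = y 0 := fun u hu =>
        eq_of_bregmanDiv_nonpos hσ (fun v => (hN0 v).1) (hstrong _ (hymax 0 hT).1 _ hu _
          fun v hv => add_dotp_sub_le_of_isMaxOn (hymax 0 hT).2 hv) ((hD u hu).trans hD0)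
      rw [sum_eq_zero fun t ht => by
        rw [hQ _ (hymax t (mem_range.1 ht)).1, hQ y' hy', sub_self, dotp_eq_dotProduct,
          dotProduct_zero], mul_zero]
      exact Real.sqrt_nonneg _
    · refine div_le_sqrt_of_mul_le (by exact_mod_cast hT) hD0 hσ hρ hη ?_
      exact (mirror_descent_regret_le (p := p) (fun x => (hN0 x).1) hσ (hη ▸ Real.sqrt_nonneg _)
        hstrong hT hymax (fun t ht => (hg t ht).2) hz hy').trans (add_le_add_left (hD y' hy') _)
  exact ⟨hregret, fun ε hε hTε y' hy' =>
    (hregret y' hy').trans (Real.sqrt_div_le_of_div_sq_le hε (Nat.cast_nonneg T) hTε)⟩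

/-- **Mirror Descent regret guarantee** (Theorem 2.2 of the paper): running Mirror
Descent with a `(1/σ)`-strongly convex mirror map `ω` on a convex function `f` with
subgradients of dual norm at most `ρ`, with step `η = √(2D/(Tσρ²))`, gives
`(1/T)·Σ_t ⟨g_t, y_t - y⟩ ≤ √(2Dσρ²/T)` for all `y ∈ Q`; in particular the average
regret is at most `ε` once `T ≥ 2Dσρ²/ε²`. -/
theorem mirror_descent_regret
    (d : ℕ) (Q : Set (Fin d → ℝ)) (hQne : Q.Nonempty) (hQcomp : IsCompact Q)
    (hQconv : Convex ℝ Q)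
    (N : (Fin d → ℝ) → ℝ)
    (hN0 : ∀ x, N x = 0 ↔ x = 0)
    (hNsmul : ∀ (a : ℝ) (x : Fin d → ℝ), N (a • x) = |a| * N x)
    (hNtri : ∀ x y, N (x + y) ≤ N x + N y)
    (σ ρ : ℝ) (hσ : 0 < σ) (hρ : 0 < ρ)
    (ω : (Fin d → ℝ) → ℝ)
    (hstrong : ∀ x ∈ Q, ∀ y ∈ Q, ∀ g : Fin d → ℝ,
      (∀ z ∈ Q, ω x + dotp g (z - x) ≤ ω z) →
      (1 / (2 * σ)) * N (y - x) ^ 2 ≤ ω y - ω x - dotp g (y - x))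
    (f : (Fin d → ℝ) → ℝ) (hf : ConvexOn ℝ Q f)
    (T : ℕ) (hT : 0 < T)
    (D : ℝ)
    (η : ℝ) (hη : η = Real.sqrt (2 * D / (T * σ * ρ ^ 2)))
    (y z g : ℕ → Fin d → ℝ)
    (hymax : ∀ t < T, y t ∈ Q ∧
      ∀ y' ∈ Q, dotp (z t) y' - ω y' ≤ dotp (z t) (y t) - ω (y t))
    (hD : ∀ y' ∈ Q, ω y' - ω (y 0) - dotp (z 0) (y' - y 0) ≤ D)
    (hg : ∀ t < T, (∀ y' ∈ Q, f (y t) + dotp (g t) (y' - y t) ≤ f y') ∧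
      dualNorm N (g t) ≤ ρ)
    (hz : ∀ t < T, z (t + 1) = z t - η • g t) :
    (∀ y' ∈ Q, (1 / (T : ℝ)) * ∑ t ∈ Finset.range T, dotp (g t) (y t - y') ≤
        Real.sqrt (2 * D * σ * ρ ^ 2 / T)) ∧
    (∀ ε : ℝ, 0 < ε → 2 * D * σ * ρ ^ 2 / ε ^ 2 ≤ (T : ℝ) →
      ∀ y' ∈ Q, (1 / (T : ℝ)) * ∑ t ∈ Finset.range T, dotp (g t) (y t - y') ≤ ε) :=
  mirror_descent_regret_general d Q N hN0 hNsmul hNtri σ ρ hσ hρ ω hstrong f T D η hη y z g hymax hD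
    hg hz
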